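/- arXiv:2306.07475 — 3 statements merged into one kernel-verified Lean document; each statement's English description precedes it below -/
import Mathlib

section
/- Fix k ≥ 1 and dimension d. There exists ε > 0 depending only on k and d such that: if Q ⊆ R^d is a cube of sidelength r > 0 and E ⊆ Q is εr-dense in Q (meaning the balls of radius εr around points of E cover Q), then there exists a signed measure μ supported on a finite subset of E with total variation ‖μ‖ ≤ C(k,d) r^d, such that for all C^k functions φ on Q, |∫_Q φ(x) dx − ∫ φ dμ| ≤ C(k,d) r^{d+k} sup_{x ∈ Q} |∇^k φ(x)|. -/
open MeasureTheory

/-- A cube in `ℝ^d` with corner `a` and sidelength `r`. -/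
def cube (d : ℕ) (a : EuclideanSpace ℝ (Fin d)) (r : ℝ) : Set (EuclideanSpace ℝ (Fin d)) :=
  {x | ∀ i, x i ∈ Set.Icc (a i) (a i + r)}

/-!
Put a grid `a + r α / k`, `α ∈ {0, …, k - 1}^d`, in the cube and pick for each grid point an
`εr`-close node `q α ∈ E`. In the cube's normalized coordinates the nodes are `ε`-perturbations
of the grid, whose Vandermonde matrix for the monomials of degree `< k` in each variable is the
`d`-fold tensor power of a one-dimensional Vandermonde matrix, hence invertible. By continuity of
the inverse, for small `ε` the perturbed matrix is invertible with inverse bounded independently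
of `E`, `a` and `r`, so the moment equations have a solution `w` with `∑ |w| = O(r^d)`. The rule
is then exact on the Taylor polynomial of `φ` of degree `< k` at the corner `a`, and the Taylor
remainder `M (√d r)^k` bounds the error on both the integral and the sum.
-/

open Set Topology
open scoped Finset Matrix

section Taylor

variable {E F : Type*} [NormedAddCommGroup E] [NormedSpace ℝ E] [NormedAddCommGroup F]
  [NormedSpace ℝ F] {s : Set E} {φ : E → F} {k : ℕ} {x₀ x : E}

noncomputable def taylorPolyWithin (φ : E → F) (s : Set E) (k : ℕ) (x₀ x : E) : F :=
  ∑ j ∈ Finset.range k, (j.factorial : ℝ)⁻¹ • iteratedFDerivWithin ℝ j φ s x₀ (fun _ => x - x₀)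

theorem iteratedDerivWithin_comp_lineMap (hs : Convex ℝ s) (hu : UniqueDiffOn ℝ s)
    (hφ : ContDiffOn ℝ k φ s) (h₀ : x₀ ∈ s) (hx : x ∈ s) {j : ℕ} (hj : j ≤ k) {t : ℝ}
    (ht : t ∈ Icc (0 : ℝ) 1) :
    iteratedDerivWithin j (fun t => φ (x₀ + t • (x - x₀))) (Icc 0 1) t
      = iteratedFDerivWithin ℝ j φ s (x₀ + t • (x - x₀)) (fun _ => x - x₀) := by
  have hmaps : MapsTo (fun t : ℝ => x₀ + t • (x - x₀)) (Icc 0 1) s :=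
    fun t ht => hs.add_smul_sub_mem h₀ hx ht
  induction j generalizing t with
  | zero => simp
  | succ j ih =>
    have hline : HasDerivWithinAt (fun t : ℝ => x₀ + t • (x - x₀)) (x - x₀) (Icc 0 1) t := by
      simpa using (((hasDerivAt_id t).smul_const (x - x₀)).const_add x₀).hasDerivWithinAt
    have hD : HasFDerivWithinAt (iteratedFDerivWithin ℝ j φ s)
        (fderivWithin ℝ (iteratedFDerivWithin ℝ j φ s) s (x₀ + t • (x - x₀))) s
        (x₀ + t • (x - x₀)) :=
      (hφ.differentiableOn_iteratedFDerivWithin (by exact_mod_cast hj) hu _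
        (hmaps ht)).hasFDerivWithinAt
    have hcomp : HasDerivWithinAt
        (fun t => iteratedFDerivWithin ℝ j φ s (x₀ + t • (x - x₀)) (fun _ => x - x₀))
        (fderivWithin ℝ (iteratedFDerivWithin ℝ j φ s) s (x₀ + t • (x - x₀)) (x - x₀)
          (fun _ => x - x₀)) (Icc 0 1) t := by
      exact (hD.continuousMultilinear_apply_const _).comp_hasDerivWithinAt t hline hmaps
    rw [iteratedDerivWithin_succ, derivWithin_congr (fun t ht => ih (Nat.le_of_succ_le hj) ht)
      (ih (Nat.le_of_succ_le hj) ht), hcomp.derivWithin (uniqueDiffOn_Icc zero_lt_one t ht),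
      iteratedFDerivWithin_succ_apply_left]
    rfl

theorem norm_sub_taylorPolyWithin_le (hs : Convex ℝ s) (hu : UniqueDiffOn ℝ s) (hk : 1 ≤ k)
    (hφ : ContDiffOn ℝ k φ s) (h₀ : x₀ ∈ s) (hx : x ∈ s) {M : ℝ}
    (hM : ∀ y ∈ s, ‖iteratedFDerivWithin ℝ k φ s y‖ ≤ M) :
    ‖φ x - taylorPolyWithin φ s k x₀ x‖ ≤ M * ‖x - x₀‖ ^ k := by
  obtain ⟨n, rfl⟩ : ∃ n, k = n + 1 := ⟨k - 1, by omega⟩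
  have hmaps : MapsTo (fun t : ℝ => x₀ + t • (x - x₀)) (Icc 0 1) s :=
    fun t ht => hs.add_smul_sub_mem h₀ hx ht
  have hg : ContDiffOn ℝ (n + 1 : ℕ) (fun t : ℝ => φ (x₀ + t • (x - x₀))) (Icc 0 1) :=
    hφ.comp (by fun_prop) hmaps
  have hbound : ∀ t ∈ Icc (0 : ℝ) 1,
      ‖iteratedDerivWithin (n + 1) (fun t => φ (x₀ + t • (x - x₀))) (Icc 0 1) t‖
        ≤ M * ‖x - x₀‖ ^ (n + 1) := by
    intro t ht
    rw [iteratedDerivWithin_comp_lineMap hs hu hφ h₀ hx le_rfl ht]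
    refine ((iteratedFDerivWithin ℝ (n + 1) φ s _).le_opNorm _).trans ?_
    simp only [Finset.prod_const, Finset.card_univ, Fintype.card_fin]
    gcongr
    exact hM _ (hmaps ht)
  have htaylor : taylorWithinEval (fun t => φ (x₀ + t • (x - x₀))) n (Icc 0 1) 0 1
      = taylorPolyWithin φ s (n + 1) x₀ x := by
    rw [taylor_within_apply, taylorPolyWithin]
    refine Finset.sum_congr rfl fun j hj => ?_
    rw [iteratedDerivWithin_comp_lineMap hs hu hφ h₀ hx (by simp at hj; omega)
      (left_mem_Icc.2 zero_le_one)]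
    simp
  have hM₀ : 0 ≤ M := (norm_nonneg _).trans (hM x₀ h₀)
  calc ‖φ x - taylorPolyWithin φ s (n + 1) x₀ x‖
      ≤ M * ‖x - x₀‖ ^ (n + 1) * (1 - 0) ^ (n + 1) / n.factorial := by
        simpa [htaylor] using
          taylor_mean_remainder_bound zero_le_one hg (right_mem_Icc.2 zero_le_one) hbound
    _ ≤ M * ‖x - x₀‖ ^ (n + 1) := by
        simpa using div_le_self (by positivity) (by exact_mod_cast n.factorial_pos)

end Taylor

section Cube

variable {d : ℕ} {a : EuclideanSpace ℝ (Fin d)} {r : ℝ}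

theorem cube_eq_preimage :
    cube d a r = WithLp.ofLp ⁻¹' univ.pi fun i => Icc (a i) (a i + r) := by
  ext x; simp only [cube, mem_preimage, mem_univ_pi]; rfl

theorem convex_cube : Convex ℝ (cube d a r) := by
  rw [cube_eq_preimage]
  exact (convex_pi fun i _ => convex_Icc _ _).linear_preimage
    (EuclideanSpace.equiv (Fin d) ℝ).toLinearMap

theorem isCompact_cube : IsCompact (cube d a r) := by
  rw [cube_eq_preimage]
  exact (EuclideanSpace.equiv (Fin d) ℝ).toHomeomorph.isCompact_preimage.2
    (isCompact_univ_pi fun i => isCompact_Icc)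

theorem uniqueDiffOn_cube (hr : 0 < r) : UniqueDiffOn ℝ (cube d a r) := by
  rw [cube_eq_preimage]
  exact (EuclideanSpace.equiv (Fin d) ℝ).uniqueDiffOn_preimage_iff.2
    (UniqueDiffOn.univ_pi fun i => uniqueDiffOn_Icc (by linarith))

theorem left_mem_cube (hr : 0 ≤ r) : a ∈ cube d a r := fun i => ⟨le_rfl, by linarith⟩

theorem volume_real_cube (hr : 0 ≤ r) : volume.real (cube d a r) = r ^ d := by
  rw [cube_eq_preimage, measureReal_def, (PiLp.volume_preserving_ofLp (Fin d)).measure_preimage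
    (MeasurableSet.univ_pi fun i => measurableSet_Icc).nullMeasurableSet, volume_pi_pi]
  simp [Real.volume_Icc, hr]

theorem dist_le_of_mem_cube (hr : 0 ≤ r) {x y : EuclideanSpace ℝ (Fin d)} (hx : x ∈ cube d a r)
    (hy : y ∈ cube d a r) : dist x y ≤ √d * r := by
  rw [EuclideanSpace.dist_eq]
  calc √(∑ i, dist (x i) (y i) ^ 2) ≤ √(∑ _i : Fin d, r ^ 2) := by
        gcongr with i
        simpa using Real.dist_le_of_mem_Icc (hx i) (hy i)
    _ = √d * r := by simp [Real.sqrt_mul, hr]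

end Cube

section Quadrature

variable {X ι : Type*} [MeasurableSpace X] [Fintype ι] {μ : Measure X} {s : Set X} {q : ι → X}
  {w : ι → ℝ}

/-- Integrability is part of exactness, so that exactness passes to sums. -/
def QuadratureExact (μ : Measure X) (s : Set X) (q : ι → X) (w : ι → ℝ) (f : X → ℝ) : Prop :=
  IntegrableOn f s μ ∧ ∫ x in s, f x ∂μ = ∑ i, w i * f (q i)

theorem QuadratureExact.const_mul {f : X → ℝ} (h : QuadratureExact μ s q w f) (c : ℝ) :
    QuadratureExact μ s q w fun x => c * f x := by
  refine ⟨h.1.const_mul c, ?_⟩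
  rw [integral_const_mul, h.2, Finset.mul_sum]
  exact Finset.sum_congr rfl fun i _ => by ring

theorem QuadratureExact.finsetSum {κ : Type*} {t : Finset κ} {f : κ → X → ℝ}
    (h : ∀ j ∈ t, QuadratureExact μ s q w (f j)) :
    QuadratureExact μ s q w fun x => ∑ j ∈ t, f j x := by
  refine ⟨integrable_finsetSum t fun j hj => (h j hj).1, ?_⟩
  rw [integral_finsetSum t fun j hj => (h j hj).1, Finset.sum_congr rfl fun j hj => (h j hj).2,
    Finset.sum_comm]
  simp only [Finset.mul_sum]

theorem abs_integral_sub_sum_le {φ T : X → ℝ} {δ : ℝ} (hT : QuadratureExact μ s q w T)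
    (hφ : IntegrableOn φ s μ) (hs : μ s < ⊤) (hq : ∀ i, q i ∈ s)
    (hδ : ∀ x ∈ s, |φ x - T x| ≤ δ) :
    |∫ x in s, φ x ∂μ - ∑ i, w i * φ (q i)| ≤ (μ.real s + ∑ i, |w i|) * δ := by
  have hsplit : ∫ x in s, φ x ∂μ - ∑ i, w i * φ (q i)
      = ∫ x in s, (φ x - T x) ∂μ + ∑ i, w i * (T (q i) - φ (q i)) := by
    rw [integral_sub hφ hT.1, hT.2]
    simp only [mul_sub, Finset.sum_sub_distrib]
    ring
  have hint : |∫ x in s, (φ x - T x) ∂μ| ≤ δ * μ.real s :=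
    norm_setIntegral_le_of_norm_le_const hs fun x hx => (Real.norm_eq_abs _).trans_le (hδ x hx)
  have hsum : |∑ i, w i * (T (q i) - φ (q i))| ≤ ∑ i, |w i| * δ := by
    refine (Finset.abs_sum_le_sum_abs _ _).trans (Finset.sum_le_sum fun i _ => ?_)
    rw [abs_mul, abs_sub_comm]
    exact mul_le_mul_of_nonneg_left (hδ _ (hq i)) (abs_nonneg _)
  rw [hsplit, add_mul, Finset.sum_mul]
  linarith [abs_add_le (∫ x in s, (φ x - T x) ∂μ) (∑ i, w i * (T (q i) - φ (q i)))]

end Quadrature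

theorem exists_finset_sum_mul_eq_sum_mul_comp {X ι : Type*} [Fintype ι] (q : ι → X) (w : ι → ℝ) :
    ∃ (s : Finset X) (c : X → ℝ), ↑s ⊆ range q ∧ ∑ x ∈ s, |c x| ≤ ∑ i, |w i| ∧
      ∀ f : X → ℝ, ∑ x ∈ s, c x * f x = ∑ i, w i * f (q i) := by
  classical
  have hmaps : ∀ i ∈ (Finset.univ : Finset ι), q i ∈ Finset.univ.image q :=
    fun i _ => Finset.mem_image_of_mem q (Finset.mem_univ i)
  refine ⟨Finset.univ.image q, fun x => ∑ i with q i = x, w i, by simp, ?_, fun f => ?_⟩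
  · calc ∑ x ∈ Finset.univ.image q, |∑ i with q i = x, w i|
        ≤ ∑ x ∈ Finset.univ.image q, ∑ i with q i = x, |w i| :=
          Finset.sum_le_sum fun x _ => Finset.abs_sum_le_sum_abs _ _
      _ = ∑ i, |w i| := Finset.sum_fiberwise_of_maps_to hmaps _
  · rw [← Finset.sum_fiberwise_of_maps_to hmaps]
    refine Finset.sum_congr rfl fun x _ => ?_
    rw [Finset.sum_mul]
    exact Finset.sum_congr rfl fun i hi => by rw [(Finset.mem_filter.1 hi).2]

namespace Matrix

variable (ι : Type*) {m n o R : Type*} [Fintype ι]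

def tensorPow [CommSemiring R] (A : Matrix m n R) : Matrix (ι → m) (ι → n) R :=
  fun β α => ∏ i, A (β i) (α i)

variable {ι}

theorem tensorPow_mul [DecidableEq ι] [CommSemiring R] [Fintype n] (A : Matrix m n R)
    (B : Matrix n o R) :
    tensorPow ι A * tensorPow ι B = tensorPow ι (A * B) := by
  ext β γ
  simp only [mul_apply, tensorPow, ← Finset.prod_mul_distrib, Fintype.prod_sum]

theorem tensorPow_one [CommSemiring R] [DecidableEq m] :
    tensorPow ι (1 : Matrix m m R) = 1 := by
  ext β γ
  simp only [tensorPow, one_apply, Fintype.prod_boole, funext_iff]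

theorem isUnit_det_tensorPow [DecidableEq ι] [CommRing R] [Fintype m] [DecidableEq m]
    {A : Matrix m m R} (hA : IsUnit A.det) : IsUnit (tensorPow ι A).det := by
  have h := congrArg det (tensorPow_mul (ι := ι) A A⁻¹)
  rw [mul_nonsing_inv A hA, tensorPow_one, det_mul, det_one] at h
  exact IsUnit.of_mul_eq_one _ h

/-- Rows are indexed by exponents and columns by points, as in the transpose of
`Matrix.vandermonde`. -/
def multiVandermonde [CommSemiring R] (k : ℕ) (p : (ι → Fin k) → ι → R) :
    Matrix (ι → Fin k) (ι → Fin k) R :=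
  fun β α => ∏ i, p α i ^ (β i : ℕ)

theorem multiVandermonde_grid [CommRing R] {k : ℕ} (v : Fin k → R) :
    multiVandermonde k (fun α i => v (α i)) = tensorPow ι (vandermonde v)ᵀ :=
  rfl

theorem isUnit_det_multiVandermonde_grid [DecidableEq ι] [Field R] {k : ℕ} {v : Fin k → R}
    (hv : Function.Injective v) : IsUnit (multiVandermonde k (ι := ι) fun α i => v (α i)).det := by
  rw [multiVandermonde_grid]
  exact isUnit_det_tensorPow (by simpa using det_vandermonde_ne_zero_iff.2 hv)

theorem continuous_multiVandermonde [CommSemiring R] [TopologicalSpace R]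
    [IsTopologicalSemiring R] (k : ℕ) :
    Continuous (multiVandermonde (ι := ι) (R := R) k) := by
  unfold multiVandermonde
  fun_prop

theorem eventually_sum_abs_inv_le {X : Type*} [TopologicalSpace X] [Fintype n] [DecidableEq n]
    {A : X → Matrix n n ℝ} {x₀ : X} (hA : ContinuousAt A x₀) (h : IsUnit (A x₀).det) :
    ∃ K, ∀ᶠ x in 𝓝 x₀, IsUnit (A x).det ∧ ∑ i, ∑ j, |(A x)⁻¹ i j| ≤ K := by
  have hdet : ContinuousAt (fun x => (A x).det) x₀ :=
    continuous_id.matrix_det.continuousAt.comp hA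
  have hinv : ContinuousAt (fun x => (A x)⁻¹) x₀ :=
    (continuousAt_matrix_inv _ (NormedRing.inverse_continuousAt h.unit)).comp hA
  have hsum : ContinuousAt (fun x => ∑ i, ∑ j, |(A x)⁻¹ i j|) x₀ := by
    refine ContinuousAt.comp (g := fun B : Matrix n n ℝ => ∑ i, ∑ j, |B i j|) ?_ hinv
    exact (continuous_finsetSum _ fun i _ => continuous_finsetSum _ fun j _ =>
      (continuous_id.matrix_elem i j).abs).continuousAt
  refine ⟨∑ i, ∑ j, |(A x₀)⁻¹ i j| + 1, ?_⟩
  filter_upwards [hdet.eventually_ne h.ne_zero, hsum.eventually (gt_mem_nhds (lt_add_one _))]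
    with x hx hx' using ⟨isUnit_iff_ne_zero.2 hx, hx'.le⟩

theorem sum_abs_mulVec_le [Fintype m] [Fintype n] (A : Matrix m n ℝ)
    {b : n → ℝ} {B : ℝ} (hb : ∀ j, |b j| ≤ B) :
    ∑ i, |(A *ᵥ b) i| ≤ (∑ i, ∑ j, |A i j|) * B := by
  rw [Finset.sum_mul]
  refine Finset.sum_le_sum fun i _ => (Finset.abs_sum_le_sum_abs _ _).trans ?_
  rw [Finset.sum_mul]
  refine Finset.sum_le_sum fun j _ => ?_
  rw [abs_mul]
  exact mul_le_mul_of_nonneg_left (hb j) (abs_nonneg _)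

theorem exists_sum_abs_inv_multiVandermonde_le [DecidableEq ι] {k : ℕ} {v : Fin k → ℝ}
    (hv : Function.Injective v) :
    ∃ ε > (0 : ℝ), ∃ K ≥ (0 : ℝ), ∀ p : (ι → Fin k) → ι → ℝ, (∀ α i, |p α i - v (α i)| ≤ ε) →
      IsUnit (multiVandermonde k p).det ∧ ∑ α, ∑ β, |(multiVandermonde k p)⁻¹ α β| ≤ K := by
  obtain ⟨K, hK⟩ := eventually_sum_abs_inv_le (continuous_multiVandermonde k).continuousAt
    (isUnit_det_multiVandermonde_grid (ι := ι) hv)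
  obtain ⟨δ, hδ, hball⟩ := Metric.eventually_nhds_iff.1 hK
  refine ⟨δ / 2, half_pos hδ, K, ?_, fun p hp => hball ?_⟩
  · exact (Finset.sum_nonneg fun _ _ => Finset.sum_nonneg fun _ _ => abs_nonneg _).trans
      hK.self_of_nhds.2
  · refine (dist_pi_le_iff (half_pos hδ).le).2 (fun α => ?_) |>.trans_lt (half_lt_self hδ)
    exact (dist_pi_le_iff (half_pos hδ).le).2 fun i => hp α i

end Matrix

theorem MultilinearMap.apply_diag_eq_sum_basis {R M N κ ι : Type*} [CommSemiring R]
    [AddCommMonoid M] [Module R M] [AddCommMonoid N] [Module R N] [Fintype κ] [Fintype ι]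
    [DecidableEq ι] (F : MultilinearMap R (fun _ : ι => M) N) (b : Module.Basis κ R M) (y : M) :
    F (fun _ => y) = ∑ v : ι → κ, (∏ l, b.repr y (v l)) • F (fun l => b (v l)) := by
  conv_lhs => rw [← b.sum_repr y]
  rw [F.map_sum]
  exact Finset.sum_congr rfl fun v _ => F.map_smul_univ _ _

section CubeQuadrature

variable {d k : ℕ} {a : EuclideanSpace ℝ (Fin d)} {r : ℝ}

noncomputable def gridNode (k : ℕ) (j : Fin k) : ℝ := (j : ℝ) / k

theorem gridNode_injective : Function.Injective (gridNode k) := by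
  intro i j h
  have hk : (k : ℝ) ≠ 0 := by exact_mod_cast i.pos.ne'
  exact Fin.ext (by exact_mod_cast (div_left_inj' hk).1 h)

theorem gridNode_mem_Icc (j : Fin k) : gridNode k j ∈ Icc (0 : ℝ) 1 := by
  have hk : (0 : ℝ) < k := by exact_mod_cast j.pos
  exact ⟨by unfold gridNode; positivity,
    (div_le_one hk).2 (by exact_mod_cast j.isLt.le)⟩

noncomputable def gridPoint (a : EuclideanSpace ℝ (Fin d)) (r : ℝ) (α : Fin d → Fin k) :
    EuclideanSpace ℝ (Fin d) :=
  WithLp.toLp 2 fun i => a i + r * gridNode k (α i)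

theorem gridPoint_mem_cube (hr : 0 ≤ r) (α : Fin d → Fin k) : gridPoint a r α ∈ cube d a r :=
    fun i => by
  obtain ⟨h₀, h₁⟩ := gridNode_mem_Icc (α i)
  exact ⟨by simp only [gridPoint]; nlinarith, by simp only [gridPoint]; nlinarith⟩

noncomputable def scaledMonomial (a : EuclideanSpace ℝ (Fin d)) (r : ℝ) (β : Fin d → ℕ)
    (x : EuclideanSpace ℝ (Fin d)) : ℝ :=
  ∏ i, ((x i - a i) / r) ^ β i

theorem scaledMonomial_eq_prod_sub (hr : r ≠ 0) (x : EuclideanSpace ℝ (Fin d)) {j : ℕ}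
    (v : Fin j → Fin d) :
    ∏ l, (x (v l) - a (v l)) = r ^ j * scaledMonomial a r (fun i => #{l | v l = i}) x := by
  set u : Fin d → ℝ := fun i => (x i - a i) / r
  have hfiber : ∀ i, ∏ l with v l = i, u (v l) = u i ^ #{l | v l = i} := fun i => by
    rw [Finset.prod_congr rfl fun l hl => by rw [(Finset.mem_filter.1 hl).2], Finset.prod_const]
  calc ∏ l, (x (v l) - a (v l)) = ∏ l, r * u (v l) :=
        Finset.prod_congr rfl fun l _ => (mul_div_cancel₀ _ hr).symm
    _ = r ^ j * ∏ i, ∏ l with v l = i, u (v l) := by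
        rw [Finset.prod_mul_distrib, Finset.prod_const, Finset.card_univ, Fintype.card_fin,
          Finset.prod_fiberwise]
    _ = r ^ j * scaledMonomial a r (fun i => #{l | v l = i}) x := by
        simp only [hfiber, scaledMonomial, u]

theorem abs_scaledMonomial_le_one {x : EuclideanSpace ℝ (Fin d)} (hr : 0 < r)
    (hx : x ∈ cube d a r) (β : Fin d → ℕ) : |scaledMonomial a r β x| ≤ 1 := by
  rw [scaledMonomial, Finset.abs_prod]
  refine Finset.prod_le_one (fun _ _ => abs_nonneg _) fun i _ => ?_
  rw [abs_pow, abs_div, abs_of_pos hr]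
  refine pow_le_one₀ (by positivity) ((div_le_one hr).2 (abs_le.2 ⟨?_, ?_⟩)) <;>
    linarith [(hx i).1, (hx i).2]

variable {ι : Type*} [Fintype ι] {μ : Measure (EuclideanSpace ℝ (Fin d))}
  {s : Set (EuclideanSpace ℝ (Fin d))} {q : ι → EuclideanSpace ℝ (Fin d)} {w : ι → ℝ}

theorem QuadratureExact.prod_sub (hr : r ≠ 0)
    (h : ∀ β : Fin d → ℕ, (∀ i, β i < k) → QuadratureExact μ s q w (scaledMonomial a r β))
    {j : ℕ} (hj : j < k) (v : Fin j → Fin d) :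
    QuadratureExact μ s q w fun x => ∏ l, (x (v l) - a (v l)) := by
  simp only [scaledMonomial_eq_prod_sub hr _ v]
  exact (h _ fun i => (Finset.card_le_univ _).trans_lt (by simpa using hj)).const_mul _

theorem QuadratureExact.taylorPolyWithin (hr : r ≠ 0)
    (h : ∀ β : Fin d → ℕ, (∀ i, β i < k) → QuadratureExact μ s q w (scaledMonomial a r β))
    (φ : EuclideanSpace ℝ (Fin d) → ℝ) (t : Set (EuclideanSpace ℝ (Fin d))) :
    QuadratureExact μ s q w (_root_.taylorPolyWithin φ t k a) := by
  have hexpand : _root_.taylorPolyWithin φ t k a = fun x => ∑ j ∈ Finset.range k,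
      (j.factorial : ℝ)⁻¹ * ∑ v : Fin j → Fin d,
        iteratedFDerivWithin ℝ j φ t a (fun l => PiLp.basisFun 2 ℝ (Fin d) (v l)) *
          ∏ l, (x (v l) - a (v l)) := by
    ext x
    simp only [_root_.taylorPolyWithin, smul_eq_mul]
    refine Finset.sum_congr rfl fun j _ => ?_
    have := (iteratedFDerivWithin ℝ j φ t a).toMultilinearMap.apply_diag_eq_sum_basis
      (PiLp.basisFun 2 ℝ (Fin d)) (x - a)
    simp only [ContinuousMultilinearMap.coe_coe, PiLp.basisFun_repr, smul_eq_mul] at this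
    simp only [this, PiLp.sub_apply, mul_comm]
  rw [hexpand]
  exact .finsetSum fun j hj => .const_mul (.finsetSum fun v _ =>
    (prod_sub hr h (Finset.mem_range.1 hj) v).const_mul _) _

theorem exists_quadratureExact_scaledMonomial (d k : ℕ) :
    ∃ ε > (0 : ℝ), ∃ K ≥ (0 : ℝ), ∀ (a : EuclideanSpace ℝ (Fin d)) (r : ℝ), 0 < r →
      ∀ q : (Fin d → Fin k) → EuclideanSpace ℝ (Fin d),
      (∀ α, dist (q α) (gridPoint a r α) ≤ ε * r) →
      ∃ w : (Fin d → Fin k) → ℝ, ∑ α, |w α| ≤ K * r ^ d ∧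
        ∀ β : Fin d → ℕ, (∀ i, β i < k) →
          QuadratureExact volume (cube d a r) q w (scaledMonomial a r β) := by
  obtain ⟨ε, hε, K, hK, hinv⟩ :=
    Matrix.exists_sum_abs_inv_multiVandermonde_le (ι := Fin d) (gridNode_injective (k := k))
  refine ⟨ε, hε, K, hK, fun a r hr q hq => ?_⟩
  set A := Matrix.multiVandermonde k fun α i => (q α i - a i) / r
  set b : (Fin d → Fin k) → ℝ := fun β => ∫ x in cube d a r, scaledMonomial a r (β ·) x
  have hnodes : ∀ α i, |(q α i - a i) / r - gridNode k (α i)| ≤ ε := fun α i => by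
    have : (q α i - a i) / r - gridNode k (α i) = (q α i - gridPoint a r α i) / r := by
      simp only [gridPoint]; field_simp; ring
    rw [this, abs_div, abs_of_pos hr, div_le_iff₀ hr, ← Real.dist_eq]
    exact (PiLp.dist_apply_le _ _ i).trans (hq α)
  obtain ⟨hA, hAK⟩ := hinv _ hnodes
  have hb : ∀ β, |b β| ≤ r ^ d := fun β => by
    simpa [volume_real_cube hr.le] using norm_setIntegral_le_of_norm_le_const
      (isCompact_cube.measure_lt_top (μ := volume)) fun x hx =>
        (Real.norm_eq_abs _).trans_le (abs_scaledMonomial_le_one hr hx (β ·))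
  refine ⟨A⁻¹ *ᵥ b, ?_, fun β hβ => ⟨?_, ?_⟩⟩
  · calc ∑ α, |(A⁻¹ *ᵥ b) α| ≤ (∑ α, ∑ β, |A⁻¹ α β|) * r ^ d := A⁻¹.sum_abs_mulVec_le hb
      _ ≤ K * r ^ d := by gcongr
  · exact (by unfold scaledMonomial; fun_prop : Continuous (scaledMonomial a r β)).continuousOn
      |>.integrableOn_compact isCompact_cube
  · have hsolve : A *ᵥ (A⁻¹ *ᵥ b) = b := by
      rw [Matrix.mulVec_mulVec, Matrix.mul_nonsing_inv A hA, Matrix.one_mulVec]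
    calc ∫ x in cube d a r, scaledMonomial a r β x = b fun i => ⟨β i, hβ i⟩ := rfl
      _ = (A *ᵥ (A⁻¹ *ᵥ b)) fun i => ⟨β i, hβ i⟩ := by rw [hsolve]
      _ = ∑ α, (A⁻¹ *ᵥ b) α * scaledMonomial a r β (q α) :=
        Finset.sum_congr rfl fun α _ => mul_comm _ _

end CubeQuadrature

/-- Integration by sampling on a cube: if `E` is `εr`-dense in a cube `Q` of sidelength `r`,
there is a finitely supported signed measure on `E` of total variation `≤ C r^d` integrating
`C^k` functions on `Q` up to an error `C r^{d+k} sup_Q |∇^k φ|`. -/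
theorem local_sampling_measure (d k : ℕ) (hk : 1 ≤ k) :
    ∃ ε > (0 : ℝ), ∃ C > (0 : ℝ),
      ∀ (a : EuclideanSpace ℝ (Fin d)) (r : ℝ), 0 < r →
      ∀ E : Set (EuclideanSpace ℝ (Fin d)), E ⊆ cube d a r →
      (∀ x ∈ cube d a r, ∃ e ∈ E, dist x e ≤ ε * r) →
      ∃ (s : Finset (EuclideanSpace ℝ (Fin d))) (c : EuclideanSpace ℝ (Fin d) → ℝ),
        ↑s ⊆ E ∧ (∑ x ∈ s, |c x|) ≤ C * r ^ d ∧
        ∀ (φ : EuclideanSpace ℝ (Fin d) → ℝ) (M : ℝ),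
          ContDiffOn ℝ k φ (cube d a r) →
          (∀ x ∈ cube d a r, ‖iteratedFDerivWithin ℝ k φ (cube d a r) x‖ ≤ M) →
          |(∫ x in cube d a r, φ x) - ∑ x ∈ s, c x * φ x| ≤ C * r ^ (d + k) * M := by
  obtain ⟨ε, hε, K, hK, hquad⟩ := exists_quadratureExact_scaledMonomial d k
  refine ⟨ε, hε, (1 + K) * (1 + √d ^ k), by positivity, fun a r hr E hEQ hdense => ?_⟩
  choose q hqE hq using fun α : Fin d → Fin k =>
    hdense (gridPoint a r α) (gridPoint_mem_cube hr.le α)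
  obtain ⟨w, hw, hexact⟩ := hquad a r hr q fun α => (dist_comm _ _).trans_le (hq α)
  obtain ⟨s, c, hsq, hc, hsum⟩ := exists_finset_sum_mul_eq_sum_mul_comp q w
  refine ⟨s, c, hsq.trans (range_subset_iff.2 hqE), hc.trans (hw.trans ?_), fun φ M hφ hM => ?_⟩
  · gcongr
    nlinarith [pow_nonneg (Real.sqrt_nonneg d) k]
  have hM₀ : 0 ≤ M := (norm_nonneg _).trans (hM a (left_mem_cube hr.le))
  have htaylor : ∀ x ∈ cube d a r,
      |φ x - taylorPolyWithin φ (cube d a r) k a x| ≤ M * (√d * r) ^ k := fun x hx =>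
    (norm_sub_taylorPolyWithin_le convex_cube (uniqueDiffOn_cube hr) hk hφ (left_mem_cube hr.le)
      hx hM).trans (by gcongr; exact dist_le_of_mem_cube hr.le hx (left_mem_cube hr.le))
  rw [hsum]
  calc _ ≤ (volume.real (cube d a r) + ∑ α, |w α|) * (M * (√d * r) ^ k) :=
        abs_integral_sub_sum_le (QuadratureExact.taylorPolyWithin hr.ne' hexact φ _)
          (hφ.continuousOn.integrableOn_compact isCompact_cube) isCompact_cube.measure_lt_top
          (fun α => hEQ (hqE α)) htaylor
    _ ≤ (r ^ d + K * r ^ d) * (M * (√d * r) ^ k) := by rw [volume_real_cube hr.le]; gcongr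
    _ = (1 + K) * √d ^ k * r ^ (d + k) * M := by ring
    _ ≤ (1 + K) * (1 + √d ^ k) * r ^ (d + k) * M := by gcongr; linarith
end

section
/- Let A, B be closed discrete subsets of R^d and let F_{A,B} : S(R^d) → S(A) ⊕ S(B) be the map f ↦ (f|_A, f̂|_B), where S(A) denotes rapidly decreasing sequences on A. Suppose A' ⊇ A and B' ⊇ B are closed discrete supersets such that F_{A',B'} has finite-dimensional cokernel, and suppose A'∖A and B'∖B are infinite. Then the kernel of F_{A,B} is infinite-dimensional. -/
open MeasureTheory

noncomputable def jb {d : ℕ} (x : EuclideanSpace ℝ (Fin d)) : ℝ := Real.sqrt (1 + ‖x‖ ^ 2)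

/-- A sequence on `A` is rapidly decreasing if `|α(a)| ⟨a⟩^N` is bounded for every `N`. -/
def IsRapid {d : ℕ} {A : Set (EuclideanSpace ℝ (Fin d))} (α : A → ℂ) : Prop :=
  ∀ N : ℕ, ∃ C : ℝ, ∀ a : A, ‖α a‖ * jb (a : EuclideanSpace ℝ (Fin d)) ^ N ≤ C

/-- The map `F_{A,B} f = (f|_A, f̂|_B)`. -/
noncomputable def restrMap {d : ℕ} (A B : Set (EuclideanSpace ℝ (Fin d)))
    (f : SchwartzMap (EuclideanSpace ℝ (Fin d)) ℂ) : (A → ℂ) × (B → ℂ) :=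
  (fun a => f a, fun b => FourierTransform.fourier (⇑f : EuclideanSpace ℝ (Fin d) → ℂ) b)

/-- `F_{A,B}` has finite-dimensional cokernel: finitely many rapidly decreasing pairs
span `𝓢(A) ⊕ 𝓢(B)` together with the image of `F_{A,B}`. -/
def CokerFinDim {d : ℕ} (A B : Set (EuclideanSpace ℝ (Fin d))) : Prop :=
  ∃ (n : ℕ) (v : Fin n → ((A → ℂ) × (B → ℂ))),
    (∀ i, IsRapid (v i).1 ∧ IsRapid (v i).2) ∧
    ∀ αβ : (A → ℂ) × (B → ℂ), IsRapid αβ.1 → IsRapid αβ.2 →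
      ∃ (f : SchwartzMap (EuclideanSpace ℝ (Fin d)) ℂ) (c : Fin n → ℂ),
        αβ = restrMap A B f + ∑ i, c i • v i

/-!
Choose `n + k` points of `A' \ A`, where `k` vectors span the cokernel of `F_{A',B'}`. The
pairs `(α, 0)` with `α` supported on these points form an `(n + k)`-dimensional space of rapidly
decreasing data; modulo the image of `F_{A',B'}` they span at most `k` dimensions, so an
`n`-dimensional subspace of them is hit exactly by Schwartz functions. Such an `f` has `f̂ = 0`
on `B' ⊇ B` and `f = 0` on `A' ∖ {chosen points} ⊇ A`.
-/

open Module LinearMap in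
/-- The composite `U → W ⧸ range T` has rank at most `dim S`, so its kernel, which `ι` maps into
`range T`, has dimension at least `n`. -/
theorem LinearMap.exists_linearIndependent_map_mem_range {K U V W : Type*} [Field K]
    [AddCommGroup U] [Module K U] [FiniteDimensional K U]
    [AddCommGroup V] [Module K V] [AddCommGroup W] [Module K W]
    (T : V →ₗ[K] W) (ι : U →ₗ[K] W) (hι : Function.Injective ι)
    (S : Submodule K W) [FiniteDimensional K S] (hS : range ι ≤ range T ⊔ S)
    {n : ℕ} (hn : n + finrank K S ≤ finrank K U) :
    ∃ f : Fin n → V, LinearIndependent K f ∧ ∀ i, T (f i) ∈ range ι := by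
  let φ := (range T).mkQ ∘ₗ ι
  have hφ : finrank K (range φ) ≤ finrank K S := by
    have : range φ ≤ S.map (range T).mkQ := by
      rintro _ ⟨u, rfl⟩
      obtain ⟨t, ht, s, hs, hts⟩ := Submodule.mem_sup.mp (hS ⟨u, rfl⟩)
      refine ⟨s, hs, ?_⟩
      simp [φ, ← hts, (Submodule.Quotient.mk_eq_zero _).mpr ht]
    exact (Submodule.finrank_mono this).trans (Submodule.finrank_map_le _ _)
  obtain ⟨u, hu⟩ := exists_linearIndependent_of_le_finrank (R := K) (M := ker φ) (n := n)
    (by have := finrank_range_add_finrank_ker φ; omega)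
  have hu_range : ∀ i, ι (u i) ∈ range T := fun i =>
    (Submodule.Quotient.mk_eq_zero _).mp (mem_ker.mp (u i).2)
  choose f hf using hu_range
  refine ⟨f, LinearIndependent.of_comp T ?_, fun i => hf i ▸ ⟨u i, rfl⟩⟩
  have hTf : T ∘ f = ι ∘ (ker φ).subtype ∘ u := funext hf
  rw [hTf]
  exact (hu.map' _ (ker φ).ker_subtype).map' ι (ker_eq_bot.mpr hι)

theorem Set.Infinite.exists_injective_fin_notMem {α : Type*} {s t : Set α}
    (h : (s \ t).Infinite) (m : ℕ) : ∃ e : Fin m → s, e.Injective ∧ ∀ j, (e j : α) ∉ t :=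
  ⟨fun j => Set.inclusion Set.sdiff_subset (h.natEmbedding _ j),
    fun _ _ hij => Fin.val_injective ((h.natEmbedding _).injective (Set.inclusion_injective _ hij)),
    fun j => (h.natEmbedding _ j).2.2⟩

theorem isRapid_of_finite_support {d : ℕ} {A : Set (EuclideanSpace ℝ (Fin d))} {α : A → ℂ}
    (hα : (Function.support α).Finite) : IsRapid α := by
  intro N
  refine ⟨∑ a ∈ hα.toFinset, ‖α a‖ * jb (a : EuclideanSpace ℝ (Fin d)) ^ N, fun a => ?_⟩
  have hterm_nonneg : ∀ a : A, 0 ≤ ‖α a‖ * jb (a : EuclideanSpace ℝ (Fin d)) ^ N :=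
    fun a => mul_nonneg (norm_nonneg _) (pow_nonneg (Real.sqrt_nonneg _) _)
  by_cases ha : α a = 0
  · simpa [ha] using Finset.sum_nonneg fun a _ => hterm_nonneg a
  · exact Finset.single_le_sum (fun a _ => hterm_nonneg a) (by simpa using ha)

theorem isRapid_extend_zero {d : ℕ} {A : Set (EuclideanSpace ℝ (Fin d))} {ι : Type*} [Finite ι]
    (e : ι → A) (s : ι → ℂ) : IsRapid (Function.extend e s 0) :=
  isRapid_of_finite_support <| (Set.finite_range e).subset <|
    Function.support_extend_zero_subset.trans (Set.image_subset_range _ _)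

noncomputable def restrMapₗ {d : ℕ} (A B : Set (EuclideanSpace ℝ (Fin d))) :
    SchwartzMap (EuclideanSpace ℝ (Fin d)) ℂ →ₗ[ℂ] (A → ℂ) × (B → ℂ) where
  toFun := restrMap A B
  map_add' f g := by
    simp only [restrMap, ← SchwartzMap.fourier_coe, FourierTransform.fourier_add]
    rfl
  map_smul' c f := by
    simp only [restrMap, ← SchwartzMap.fourier_coe, FourierTransform.fourier_smul]
    rfl

theorem mem_range_restrMapₗ_sup_span_of_isRapid {d : ℕ} {A B : Set (EuclideanSpace ℝ (Fin d))}
    {k : ℕ} {v : Fin k → (A → ℂ) × (B → ℂ)}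
    (hv : ∀ αβ : (A → ℂ) × (B → ℂ), IsRapid αβ.1 → IsRapid αβ.2 →
      ∃ (f : SchwartzMap (EuclideanSpace ℝ (Fin d)) ℂ) (c : Fin k → ℂ),
        αβ = restrMap A B f + ∑ i, c i • v i)
    {αβ : (A → ℂ) × (B → ℂ)} (h₁ : IsRapid αβ.1) (h₂ : IsRapid αβ.2) :
    αβ ∈ LinearMap.range (restrMapₗ A B) ⊔ Submodule.span ℂ (Set.range v) := by
  obtain ⟨f, c, rfl⟩ := hv αβ h₁ h₂
  exact Submodule.add_mem_sup ⟨f, rfl⟩ ((Submodule.mem_span_range_iff_exists_fun ℂ).mpr ⟨c, rfl⟩)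

theorem kernel_infinite_of_superset_coker_findim_general (d : ℕ)
    (A B A' B' : Set (EuclideanSpace ℝ (Fin d)))
    (hAA : A ⊆ A') (hBB : B ⊆ B')
    (hAinf : (A' \ A).Infinite)
    (hcoker : CokerFinDim A' B') :
    ∀ n : ℕ, ∃ f : Fin n → SchwartzMap (EuclideanSpace ℝ (Fin d)) ℂ,
      LinearIndependent ℂ f ∧
      ∀ i, (∀ a ∈ A, f i a = 0) ∧ (∀ b ∈ B, FourierTransform.fourier (⇑(f i) : EuclideanSpace ℝ (Fin d) → ℂ) b = 0) := by
  intro n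
  obtain ⟨k, v, -, hv⟩ := hcoker
  obtain ⟨e, he, he_notMem⟩ := hAinf.exists_injective_fin_notMem (n + k)
  let ι := LinearMap.inl ℂ (A' → ℂ) (B' → ℂ) ∘ₗ Function.ExtendByZero.linearMap ℂ e
  have hι : Function.Injective ι := LinearMap.inl_injective.comp (Function.extend_injective he 0)
  have hrange : LinearMap.range ι ≤
      LinearMap.range (restrMapₗ A' B') ⊔ Submodule.span ℂ (Set.range v) := by
    rintro _ ⟨s, rfl⟩
    exact mem_range_restrMapₗ_sup_span_of_isRapid hv (isRapid_extend_zero e s)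
      (isRapid_of_finite_support (by simp [ι]))
  have : FiniteDimensional ℂ (Submodule.span ℂ (Set.range v)) :=
    FiniteDimensional.span_of_finite ℂ (Set.finite_range v)
  obtain ⟨f, hf, hfι⟩ := (restrMapₗ A' B').exists_linearIndependent_map_mem_range ι hι _ hrange
    (n := n) (by simpa [Set.finrank] using finrank_range_le_card (R := ℂ) v)
  refine ⟨f, hf, fun i => ⟨fun a ha => ?_, fun b hb => ?_⟩⟩ <;> obtain ⟨s, hs⟩ := hfι i
  · have hext : Function.extend e s 0 ⟨a, hAA ha⟩ = 0 :=
      Function.extend_apply' _ _ _ fun ⟨j, hj⟩ => he_notMem j (congrArg Subtype.val hj ▸ ha)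
    exact (congrFun (congrArg Prod.fst hs) ⟨a, hAA ha⟩).symm.trans hext
  · exact (congrFun (congrArg Prod.snd hs) ⟨b, hBB hb⟩).symm

/-- If `A ⊆ A'`, `B ⊆ B'` are closed discrete sets with `A'∖A`, `B'∖B` infinite and
`F_{A',B'}` has finite-dimensional cokernel, then `Ker F_{A,B}` is infinite-dimensional. -/
theorem kernel_infinite_of_superset_coker_findim (d : ℕ)
    (A B A' B' : Set (EuclideanSpace ℝ (Fin d)))
    (hA : IsClosed A) (hB : IsClosed B) (hA' : IsClosed A') (hB' : IsClosed B')
    (hAd : DiscreteTopology A) (hBd : DiscreteTopology B)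
    (hA'd : DiscreteTopology A') (hB'd : DiscreteTopology B')
    (hAA : A ⊆ A') (hBB : B ⊆ B')
    (hAinf : (A' \ A).Infinite) (hBinf : (B' \ B).Infinite)
    (hcoker : CokerFinDim A' B') :
    ∀ n : ℕ, ∃ f : Fin n → SchwartzMap (EuclideanSpace ℝ (Fin d)) ℂ,
      LinearIndependent ℂ f ∧
      ∀ i, (∀ a ∈ A, f i a = 0) ∧ (∀ b ∈ B, FourierTransform.fourier (⇑(f i) : EuclideanSpace ℝ (Fin d) → ℂ) b = 0) :=
  kernel_infinite_of_superset_coker_findim_general d A B A' B' hAA hBB hAinf hcoker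
end

section
/- Let A ⊆ R^d be (p,δ)-separated with p > 0, and suppose every a ∈ A satisfies |a| ≥ 1. For a_0 ∈ A let φ_{a_0}(x) = ρ(δ^{−1/2}|a_0|^p (x−a_0)), where ρ is a Schwartz function with ρ(0)=1 satisfying |ρ(x)| ≤ C exp(−|x|^{0.9}). Let w(t) = exp((log t)^3). Then for all sufficiently large δ (independent of a_0), Σ_{a ∈ A, a ≠ a_0} |φ_{a_0}(a)| w(|a|^{p^{1/2}}) ≤ (1/4) w(|a_0|^{p^{1/2}}). -/
open Metric

noncomputable def wQE (t : ℝ) : ℝ := Real.exp ((Real.log t) ^ 3)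

/-!
For `a ≠ a₀` the separation gives `‖a - a₀‖ ≥ δ ⟨a₀⟩ ^ (-p) ≥ 2 ^ (-p) δ ‖a₀‖ ^ (-p)`, so the
argument `u = δ ^ (-1/2) ‖a₀‖ ^ p ‖a - a₀‖` of `ρ` is at least `2 ^ (-p) δ ^ (1/2)`. Half of the
decay `exp (-u ^ 0.9)` pays for the weight ratio `exp (p ^ (3/2) (log ‖a‖ ^ 3 - log ‖a₀‖ ^ 3))`:
if `‖a‖ ≤ 2 ‖a₀‖`, then `log ‖a‖ - log ‖a₀‖ ≤ (‖a - a₀‖ / ‖a₀‖) ^ 0.9` while the separation forces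
`‖a₀‖ ^ (p + 1) ≳ δ`; if `‖a‖ > 2 ‖a₀‖`, then `u ^ 2 ≳ ‖a‖`. The other half is summed over the
shells `⌊u⌋₊ = n`: by volume packing of the disjoint balls, the `n`-th shell holds
`O ((n + 1) ^ ((2p + 1) d))` points uniformly in `δ` and `a₀`, and only shells with
`n ≥ 2 ^ (-p) δ ^ (1/2)` occur, so the sum is the tail of a convergent series.
-/

open Real Filter Topology MeasureTheory Finset

theorem summable_rpow_mul_exp_neg_rpow {K b c : ℝ} (hK : 0 ≤ K) (hb : 0 < b) (hc : 0 < c) :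
    Summable fun n : ℕ => ((n : ℝ) + 1) ^ K * exp (-c * (n : ℝ) ^ b) := by
  have hlim : Tendsto (fun x : ℝ => (x ^ b) ^ ((K + 2) / b) * exp (-c * x ^ b)) atTop (𝓝 0) :=
    (tendsto_rpow_mul_exp_neg_mul_atTop_nhds_zero _ _ hc).comp (tendsto_rpow_atTop hb)
  refine summable_of_isBigO_nat (summable_nat_rpow_inv.2 one_lt_two) ?_
  refine Asymptotics.IsBigO.of_bound (2 ^ K) ?_
  filter_upwards [tendsto_natCast_atTop_atTop.eventually (hlim.eventually (ge_mem_nhds one_pos)),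
    eventually_ge_atTop 1] with n hn hn1
  have hn0 : (0 : ℝ) < n := by exact_mod_cast hn1
  have hpow : ((n : ℝ) ^ b) ^ ((K + 2) / b) = (n : ℝ) ^ K * (n : ℝ) ^ (2 : ℝ) := by
    rw [← rpow_mul hn0.le, mul_div_cancel₀ _ hb.ne', rpow_add hn0]
  have hsucc : ((n : ℝ) + 1) ^ K ≤ 2 ^ K * (n : ℝ) ^ K := by
    rw [← mul_rpow zero_le_two hn0.le]
    exact rpow_le_rpow (by positivity) (by linarith [show (1 : ℝ) ≤ n by exact_mod_cast hn1]) hK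
  simp only [hpow, rpow_two] at hn
  rw [norm_of_nonneg (by positivity), norm_of_nonneg (by positivity), rpow_two, ← div_eq_mul_inv,
    le_div_iff₀ (by positivity)]
  calc ((n : ℝ) + 1) ^ K * exp (-c * (n : ℝ) ^ b) * (n : ℝ) ^ 2
      = ((n : ℝ) + 1) ^ K * ((n : ℝ) ^ 2 * exp (-c * (n : ℝ) ^ b)) := by ring
    _ ≤ 2 ^ K * (n : ℝ) ^ K * ((n : ℝ) ^ 2 * exp (-c * (n : ℝ) ^ b)) := by gcongr
    _ = 2 ^ K * ((n : ℝ) ^ K * (n : ℝ) ^ 2 * exp (-c * (n : ℝ) ^ b)) := by ring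
    _ ≤ 2 ^ K := mul_le_of_le_one_right (by positivity) hn

theorem sum_le_tsum_nat_add_of_card_fiber_le {ι : Type*} [DecidableEq ι] (F : Finset ι)
    (φ : ι → ℕ) {h G : ℕ → ℝ} {n₀ : ℕ} (hG : Summable G) (hh : ∀ n, 0 ≤ h n)
    (hφ : ∀ i ∈ F, n₀ ≤ φ i) (hcard : ∀ n, n₀ ≤ n → #{i ∈ F | φ i = n} * h n ≤ G n) :
    ∑ i ∈ F, h (φ i) ≤ ∑' k, G (k + n₀) := by
  have hG0 : ∀ k, 0 ≤ G (k + n₀) := fun k =>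
    (mul_nonneg (Nat.cast_nonneg _) (hh _)).trans (hcard _ (Nat.le_add_left _ _))
  have hS : ∀ n ∈ F.image φ, n₀ ≤ n := by
    simp only [mem_image, forall_exists_index, and_imp]
    exact fun n i hi hin => hin ▸ hφ i hi
  calc ∑ i ∈ F, h (φ i) = ∑ n ∈ F.image φ, #{i ∈ F | φ i = n} * h n := by
        rw [sum_comp]; simp only [nsmul_eq_mul]
    _ ≤ ∑ n ∈ F.image φ, G n := sum_le_sum fun n hn => hcard n (hS n hn)
    _ = ∑ k ∈ (F.image φ).image (· - n₀), G (k + n₀) := by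
        rw [sum_image (g := (· - n₀)) fun x hx y hy hxy => by
          have := hS x hx; have := hS y hy; simp only at hxy; omega]
        exact sum_congr rfl fun n hn => by rw [Nat.sub_add_cancel (hS n hn)]
    _ ≤ ∑' k, G (k + n₀) :=
        ((summable_nat_add_iff n₀).2 hG).sum_le_tsum _ fun k _ => hG0 k

theorem card_mul_pow_le_of_pairwiseDisjoint_ball {E : Type*} [NormedAddCommGroup E]
    [NormedSpace ℝ E] [FiniteDimensional ℝ E] [MeasurableSpace E] [BorelSpace E]
    {F : Finset E} {c : E} {r t : ℝ} (hr : 0 < r) (ht : 0 ≤ t)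
    (hF : ∀ x ∈ F, dist x c ≤ t)
    (hdisj : (F : Set E).Pairwise fun a b => Disjoint (ball a r) (ball b r)) :
    (#F : ℝ) * r ^ Module.finrank ℝ E ≤ (t + r) ^ Module.finrank ℝ E := by
  let μ : Measure E := Measure.addHaar
  have hsub : ⋃ x ∈ F, ball x r ⊆ ball c (t + r) :=
    Set.iUnion₂_subset fun x hx y hy => by
      rw [mem_ball] at hy ⊢
      linarith [dist_triangle y x c, hF x hx]
  have hvol : (#F : ENNReal) * (ENNReal.ofReal (r ^ Module.finrank ℝ E) * μ (ball 0 1))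
      ≤ ENNReal.ofReal ((t + r) ^ Module.finrank ℝ E) * μ (ball 0 1) := by
    calc (#F : ENNReal) * (ENNReal.ofReal (r ^ Module.finrank ℝ E) * μ (ball 0 1))
        = μ (⋃ x ∈ F, ball x r) := by
          rw [measure_biUnion_finset hdisj fun x _ => measurableSet_ball]
          simp [Measure.addHaar_ball_of_pos μ _ hr]
      _ ≤ μ (ball c (t + r)) := measure_mono hsub
      _ = _ := Measure.addHaar_ball_of_pos μ c (by linarith)
  rw [← mul_assoc, ENNReal.mul_le_mul_iff_left (Metric.measure_ball_pos μ 0 one_pos).ne'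
    measure_ball_lt_top.ne, ← ENNReal.ofReal_natCast, ← ENNReal.ofReal_mul (by positivity)] at hvol
  exact (ENNReal.ofReal_le_ofReal_iff (by positivity)).1 hvol

theorem rpow_neg_half_mul_mul_rpow_neg {δ R : ℝ} (hδ : 0 < δ) (hR : 0 < R) (p c : ℝ) :
    δ ^ (-(1 : ℝ) / 2) * R ^ p * (c * δ * R ^ (-p)) = c * δ ^ (0.5 : ℝ) := by
  have hRp : R ^ p ≠ 0 := (rpow_pos_of_pos hR p).ne'
  calc δ ^ (-(1 : ℝ) / 2) * R ^ p * (c * δ * R ^ (-p))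
      = c * (δ ^ (-(1 : ℝ) / 2) * δ) * (R ^ p * (R ^ p)⁻¹) := by rw [rpow_neg hR.le]; ring
    _ = c * δ ^ (0.5 : ℝ) := by
      rw [mul_inv_cancel₀ hRp, ← rpow_add_one hδ.ne']
      norm_num

theorem log_pow_le_of_one_le {x : ℝ} (hx : 1 ≤ x) (n : ℕ) :
    log x ^ n ≤ 10 ^ n * (x ^ (0.1 : ℝ)) ^ n := by
  rw [← mul_pow]
  refine pow_le_pow_left₀ (log_nonneg hx) ?_ n
  calc log x ≤ x ^ (0.1 : ℝ) / 0.1 := log_le_rpow_div (by linarith) (by norm_num)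
    _ = 10 * x ^ (0.1 : ℝ) := by rw [div_eq_mul_inv]; norm_num; ring

theorem log_sub_log_le_rpow_div {R N s : ℝ} (hR : 0 < R) (hRN : R ≤ N) (hN2 : N ≤ 2 * R)
    (hNs : N ≤ R + s) : log N - log R ≤ (s / R) ^ (0.9 : ℝ) := by
  have hx0 : 0 ≤ N / R - 1 := by rw [sub_nonneg, one_le_div hR]; exact hRN
  have hx1 : N / R - 1 ≤ 1 := by rw [sub_le_iff_le_add, div_le_iff₀ hR]; linarith
  have hxs : N / R - 1 ≤ s / R := by rw [div_sub_one hR.ne']; gcongr; linarith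
  calc log N - log R = log (N / R) := (log_div (by linarith) hR.ne').symm
    _ ≤ N / R - 1 := log_le_sub_one_of_pos (div_pos (hR.trans_le hRN) hR)
    _ ≤ (N / R - 1) ^ (0.9 : ℝ) := self_le_rpow_of_le_one hx0 hx1 (by norm_num)
    _ ≤ (s / R) ^ (0.9 : ℝ) := by gcongr

theorem mul_log_sq_le_rpow {c C δ X N : ℝ} (hc : 0 < c) (hC : 0 ≤ C) (hδ : 0 < δ)
    (hδC : 2400 * C ≤ (c / 3) ^ (0.7 : ℝ) * δ ^ (0.25 : ℝ)) (hXδ : c / 3 * δ ≤ X) (hN : 1 ≤ N)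
    (hNX : N ≤ 2 * X) :
    6 * C * log N ^ 2 ≤ (δ ^ (-(1 : ℝ) / 2) * X) ^ (0.9 : ℝ) := by
  have hX0 : 0 < X := lt_of_lt_of_le (by positivity) hXδ
  have hlog : log N ^ 2 ≤ 400 * X ^ (0.2 : ℝ) := by
    have h2 : N ^ (0.1 : ℝ) ≤ 2 * X ^ (0.1 : ℝ) := by
      calc N ^ (0.1 : ℝ) ≤ (2 * X) ^ (0.1 : ℝ) := by gcongr
        _ = 2 ^ (0.1 : ℝ) * X ^ (0.1 : ℝ) := mul_rpow zero_le_two hX0.le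
        _ ≤ 2 * X ^ (0.1 : ℝ) := by
          gcongr
          simpa using rpow_le_rpow_of_exponent_le one_le_two (show (0.1 : ℝ) ≤ 1 by norm_num)
    have hXe : X ^ (0.2 : ℝ) = (X ^ (0.1 : ℝ)) ^ 2 := by
      rw [← rpow_natCast, ← rpow_mul hX0.le]; norm_num
    calc log N ^ 2 ≤ 10 ^ 2 * (N ^ (0.1 : ℝ)) ^ 2 := log_pow_le_of_one_le hN 2
      _ ≤ 10 ^ 2 * (2 * X ^ (0.1 : ℝ)) ^ 2 := by gcongr
      _ = 400 * X ^ (0.2 : ℝ) := by rw [hXe]; ring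
  have hδe : δ ^ (-(1 : ℝ) / 2 * 0.9) * δ ^ (0.45 : ℝ) = 1 := by
    rw [← rpow_add hδ]; norm_num
  have hXe : X ^ (0.9 : ℝ) = X ^ (0.45 : ℝ) * X ^ (0.25 : ℝ) * X ^ (0.2 : ℝ) := by
    rw [← rpow_add hX0, ← rpow_add hX0]; norm_num
  calc 6 * C * log N ^ 2 ≤ 2400 * C * X ^ (0.2 : ℝ) := by nlinarith
    _ ≤ (c / 3) ^ (0.7 : ℝ) * δ ^ (0.25 : ℝ) * X ^ (0.2 : ℝ) := by gcongr
    _ = δ ^ (-(1 : ℝ) / 2 * 0.9) * (c / 3 * δ) ^ (0.45 : ℝ) * (c / 3 * δ) ^ (0.25 : ℝ)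
        * X ^ (0.2 : ℝ) := by
      rw [mul_rpow (by positivity) hδ.le, mul_rpow (by positivity) hδ.le,
        show (0.7 : ℝ) = 0.45 + 0.25 by norm_num, rpow_add (by positivity)]
      linear_combination
        -((c / 3) ^ (0.45 : ℝ) * (c / 3) ^ (0.25 : ℝ) * δ ^ (0.25 : ℝ) * X ^ (0.2 : ℝ)) * hδe
    _ ≤ δ ^ (-(1 : ℝ) / 2 * 0.9) * X ^ (0.45 : ℝ) * X ^ (0.25 : ℝ) * X ^ (0.2 : ℝ) := by
      gcongr
    _ = (δ ^ (-(1 : ℝ) / 2) * X) ^ (0.9 : ℝ) := by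
      rw [mul_rpow (by positivity) hX0.le, ← rpow_mul hδ.le, hXe]; ring

theorem mul_log_pow_three_sub_le_of_le_two_mul {p c C δ R N s : ℝ} (hp : 0 ≤ p) (hc : 0 < c)
    (hC : 0 ≤ C) (hδ : 0 < δ) (hδC : 2400 * C ≤ (c / 3) ^ (0.7 : ℝ) * δ ^ (0.25 : ℝ))
    (hR : 1 ≤ R) (hRN : R ≤ N) (hN2 : N ≤ 2 * R) (hs : c * δ * R ^ (-p) ≤ s) (hs3 : s ≤ 3 * R)
    (hNs : N ≤ R + s) :
    C * (log N ^ 3 - log R ^ 3) ≤ (δ ^ (-(1 : ℝ) / 2) * R ^ p * s) ^ (0.9 : ℝ) / 2 := by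
  have hR0 : 0 < R := zero_lt_one.trans_le hR
  have hs0 : 0 < s := lt_of_lt_of_le (by positivity) hs
  have hRX : R ≤ R ^ (p + 1) := self_le_rpow_of_one_le hR (by linarith)
  have hXδ : c / 3 * δ ≤ R ^ (p + 1) := by
    have h := mul_le_mul_of_nonneg_right (hs.trans hs3) (rpow_nonneg hR0.le p)
    rw [mul_assoc, ← rpow_add hR0, neg_add_cancel, rpow_zero, mul_one, mul_assoc,
      ← rpow_one_add' hR0.le (by linarith), add_comm] at h
    linarith
  have hcube : log N ^ 3 - log R ^ 3 ≤ 3 * log N ^ 2 * (log N - log R) := by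
    have h0 : 0 ≤ log R := log_nonneg hR
    have h1 : log R ≤ log N := log_le_log hR0 hRN
    nlinarith [mul_nonneg (mul_nonneg (sub_nonneg.2 h1) (sub_nonneg.2 h1))
      (by linarith : 0 ≤ 2 * log N + log R)]
  have hu : δ ^ (-(1 : ℝ) / 2) * R ^ p * s = δ ^ (-(1 : ℝ) / 2) * R ^ (p + 1) * (s / R) := by
    rw [rpow_add_one hR0.ne']
    field_simp
  have hmain := mul_log_sq_le_rpow hc hC hδ hδC hXδ (hR.trans hRN) (by linarith)
  have hsR : 0 ≤ (s / R) ^ (0.9 : ℝ) := by positivity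
  calc C * (log N ^ 3 - log R ^ 3) ≤ C * (3 * log N ^ 2 * (s / R) ^ (0.9 : ℝ)) := by
        gcongr
        exact hcube.trans (by gcongr; exact log_sub_log_le_rpow_div hR0 hRN hN2 hNs)
    _ ≤ (δ ^ (-(1 : ℝ) / 2) * R ^ (p + 1)) ^ (0.9 : ℝ) * (s / R) ^ (0.9 : ℝ) / 2 := by nlinarith
    _ = (δ ^ (-(1 : ℝ) / 2) * R ^ p * s) ^ (0.9 : ℝ) / 2 := by
        rw [hu, mul_rpow (by positivity) (by positivity : 0 ≤ s / R)]

theorem mul_log_pow_three_le_of_two_mul_le {p c C δ R N s : ℝ} (hp : 0 ≤ p) (hc : 0 < c)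
    (hC : 0 ≤ C) (hδ : 0 < δ) (hδC : 4000 * C ≤ c ^ (0.6 : ℝ) * δ ^ (0.15 : ℝ))
    (hR : 1 ≤ R) (hRN : 2 * R ≤ N) (hs : c * δ * R ^ (-p) ≤ s) (hNs : N ≤ R + s) :
    C * log N ^ 3 ≤ (δ ^ (-(1 : ℝ) / 2) * R ^ p * s) ^ (0.9 : ℝ) / 2 := by
  set u := δ ^ (-(1 : ℝ) / 2) * R ^ p * s with hu_def
  have hN : 0 < N := by linarith
  have hu_sep : c * δ ^ (0.5 : ℝ) ≤ u := by
    rw [← rpow_neg_half_mul_mul_rpow_neg hδ (zero_lt_one.trans_le hR) p c, hu_def]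
    gcongr
  have hu_far : δ ^ (-(1 : ℝ) / 2) * (N / 2) ≤ u := by
    have hRp : 1 ≤ R ^ p := one_le_rpow hR hp
    rw [hu_def, mul_assoc]
    gcongr
    nlinarith
  have hu0 : 0 < u := hu_sep.trans_lt' (by positivity)
  have hu : c ^ (0.6 : ℝ) * δ ^ (0.15 : ℝ) * N ^ (0.3 : ℝ) / 2 ≤ u ^ (0.9 : ℝ) := by
    have h1 : (c * δ ^ (0.5 : ℝ)) ^ (0.6 : ℝ) ≤ u ^ (0.6 : ℝ) := by gcongr
    have h2 : (δ ^ (-(1 : ℝ) / 2) * (N / 2)) ^ (0.3 : ℝ) ≤ u ^ (0.3 : ℝ) := by gcongr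
    have h2' : (2 : ℝ) ^ (0.3 : ℝ) ≤ 2 := by
      simpa using rpow_le_rpow_of_exponent_le one_le_two (show (0.3 : ℝ) ≤ 1 by norm_num)
    calc c ^ (0.6 : ℝ) * δ ^ (0.15 : ℝ) * N ^ (0.3 : ℝ) / 2
        ≤ c ^ (0.6 : ℝ) * δ ^ (0.15 : ℝ) * N ^ (0.3 : ℝ) / 2 ^ (0.3 : ℝ) := by gcongr
      _ = (c * δ ^ (0.5 : ℝ)) ^ (0.6 : ℝ) * (δ ^ (-(1 : ℝ) / 2) * (N / 2)) ^ (0.3 : ℝ) := by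
        rw [mul_rpow hc.le (by positivity), mul_rpow (by positivity) (by positivity),
          div_rpow hN.le zero_le_two, ← rpow_mul hδ.le, ← rpow_mul hδ.le]
        have hδe : δ ^ ((0.5 : ℝ) * 0.6) * δ ^ (-(1 : ℝ) / 2 * 0.3) = δ ^ (0.15 : ℝ) := by
          rw [← rpow_add hδ]; norm_num
        rw [← hδe]
        ring
      _ ≤ u ^ (0.6 : ℝ) * u ^ (0.3 : ℝ) := mul_le_mul h1 h2 (by positivity) (by positivity)
      _ = u ^ (0.9 : ℝ) := by rw [← rpow_add hu0]; norm_num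
  have hlog : log N ^ 3 ≤ 1000 * N ^ (0.3 : ℝ) := by
    refine (log_pow_le_of_one_le (by linarith) 3).trans_eq ?_
    rw [← rpow_natCast (N ^ (0.1 : ℝ)) 3, ← rpow_mul hN.le]
    norm_num
  nlinarith [mul_le_mul_of_nonneg_left hlog hC,
    mul_le_mul_of_nonneg_right hδC (rpow_nonneg hN.le (0.3 : ℝ))]

theorem mul_log_pow_three_le {p c C δ R N s : ℝ} (hp : 0 ≤ p) (hc : 0 < c) (hC : 0 ≤ C)
    (hδ : 0 < δ) (hδ_near : 2400 * C ≤ (c / 3) ^ (0.7 : ℝ) * δ ^ (0.25 : ℝ))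
    (hδ_far : 4000 * C ≤ c ^ (0.6 : ℝ) * δ ^ (0.15 : ℝ)) (hR : 1 ≤ R) (hN : 1 ≤ N)
    (hs : c * δ * R ^ (-p) ≤ s) (hNs : N ≤ R + s) (hsN : s ≤ N + R) :
    C * log N ^ 3 ≤ (δ ^ (-(1 : ℝ) / 2) * R ^ p * s) ^ (0.9 : ℝ) / 2 + C * log R ^ 3 := by
  have hR0 : 0 < R := zero_lt_one.trans_le hR
  have hs0 : 0 < s := lt_of_lt_of_le (by positivity) hs
  rcases le_or_gt N R with hNR | hRN
  · have hlog : log N ^ 3 ≤ log R ^ 3 :=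
      pow_le_pow_left₀ (log_nonneg hN) (log_le_log (by linarith) hNR) 3
    nlinarith [rpow_nonneg (by positivity : 0 ≤ δ ^ (-(1 : ℝ) / 2) * R ^ p * s) (0.9 : ℝ)]
  rcases le_or_gt N (2 * R) with hN2 | hN2
  · linarith [mul_log_pow_three_sub_le_of_le_two_mul hp hc hC hδ hδ_near hR hRN.le hN2 hs
      (by linarith) hNs]
  · nlinarith [mul_log_pow_three_le_of_two_mul_le hp hc hC hδ hδ_far hR hN2.le hs hNs,
      pow_nonneg (log_nonneg hR) 3]

theorem mul_rpow_div_sq_le {p c v R U : ℝ} (hp : 0 ≤ p) (hc : 0 < c) (hv : 1 ≤ v) (hR : 1 ≤ R)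
    (hU : 1 ≤ U) (hcU : c * v ≤ U) :
    U * v / R ^ p * (1 + R + U * v / R ^ p) ^ p / v ^ 2 ≤ (2 + c⁻¹) ^ p * U ^ (2 * p + 1) := by
  have hR0 : 0 < R := zero_lt_one.trans_le hR
  have hU0 : 0 < U := zero_lt_one.trans_le hU
  have hRp : 1 ≤ R ^ p := one_le_rpow hR hp
  set t := U * v / R ^ p with ht
  have htU : t ≤ c⁻¹ * U ^ 2 := by
    calc t ≤ U * v := div_le_self (by positivity) hRp
      _ ≤ U * (c⁻¹ * U) := by gcongr; rw [le_inv_mul_iff₀ hc]; exact hcU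
      _ = c⁻¹ * U ^ 2 := by ring
  have hbase : 1 + R + t ≤ R * ((2 + c⁻¹) * U ^ 2) := by
    have hU2 : 1 ≤ U ^ 2 := one_le_pow₀ hU
    have h1 : R ≤ R * U ^ 2 := le_mul_of_one_le_right hR0.le hU2
    have h2 : c⁻¹ * U ^ 2 ≤ R * (c⁻¹ * U ^ 2) := le_mul_of_one_le_left (by positivity) hR
    linarith [show R * ((2 + c⁻¹) * U ^ 2) = 2 * (R * U ^ 2) + R * (c⁻¹ * U ^ 2) by ring]
  have hpow : (1 + R + t) ^ p ≤ R ^ p * ((2 + c⁻¹) ^ p * U ^ (2 * p)) := by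
    calc (1 + R + t) ^ p ≤ (R * ((2 + c⁻¹) * U ^ 2)) ^ p := by gcongr
      _ = R ^ p * ((2 + c⁻¹) ^ p * U ^ (2 * p)) := by
        rw [mul_rpow hR0.le (by positivity), mul_rpow (by positivity) (by positivity),
          ← rpow_natCast, ← rpow_mul hU0.le]
        norm_num
  calc t * (1 + R + t) ^ p / v ^ 2 ≤ t * (R ^ p * ((2 + c⁻¹) ^ p * U ^ (2 * p))) / v ^ 2 := by
        gcongr
    _ = (2 + c⁻¹) ^ p * U ^ (2 * p + 1) / v := by
        rw [ht, rpow_add_one hU0.ne']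
        field_simp
    _ ≤ (2 + c⁻¹) ^ p * U ^ (2 * p + 1) := div_le_self (by positivity) hv

theorem one_add_div_mul_rpow_div_le {p c δ R U : ℝ} (hp : 0 ≤ p) (hc : 0 < c) (hδ : 1 ≤ δ)
    (hR : 1 ≤ R) (hU : 1 ≤ U) (hcU : c * δ ^ (0.5 : ℝ) ≤ U) :
    1 + U / (δ ^ (-(1 : ℝ) / 2) * R ^ p) * (1 + R + U / (δ ^ (-(1 : ℝ) / 2) * R ^ p)) ^ p / δ
      ≤ (1 + (2 + c⁻¹) ^ p) * U ^ (2 * p + 1) := by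
  have hδ0 : 0 < δ := zero_lt_one.trans_le hδ
  have hδv : (δ ^ (0.5 : ℝ)) ^ 2 = δ := by rw [← rpow_natCast, ← rpow_mul hδ0.le]; norm_num
  have ht : U / (δ ^ (-(1 : ℝ) / 2) * R ^ p) = U * δ ^ (0.5 : ℝ) / R ^ p := by
    rw [show -(1 : ℝ) / 2 = -0.5 by norm_num, rpow_neg hδ0.le]
    field_simp
  have hmain := mul_rpow_div_sq_le hp hc (one_le_rpow hδ (by norm_num)) hR hU hcU
  rw [hδv, ← ht] at hmain
  linarith [one_le_rpow hU (by linarith : 0 ≤ 2 * p + 1)]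

theorem wQE_pos (t : ℝ) : 0 < wQE t := exp_pos _

theorem wQE_rpow {N : ℝ} (hN : 0 < N) (q : ℝ) : wQE (N ^ q) = exp (q ^ 3 * log N ^ 3) := by
  rw [wQE, log_rpow hN, mul_pow]

theorem mul_wQE_rpow_le {y C x q N R : ℝ} (hC : 0 ≤ C) (hy : y ≤ C * exp (-x)) (hN : 0 < N)
    (hR : 0 < R) (hNR : q ^ 3 * log N ^ 3 ≤ x / 2 + q ^ 3 * log R ^ 3) :
    y * wQE (N ^ q) ≤ C * exp (-(1 / 2) * x) * wQE (R ^ q) := by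
  rw [wQE_rpow hN, wQE_rpow hR]
  calc y * exp (q ^ 3 * log N ^ 3) ≤ C * exp (-x) * exp (q ^ 3 * log N ^ 3) := by gcongr
    _ = C * exp (-x + q ^ 3 * log N ^ 3) := by rw [exp_add]; ring
    _ ≤ C * exp (-(1 / 2) * x + q ^ 3 * log R ^ 3) := by gcongr C * exp ?_; linarith
    _ = C * exp (-(1 / 2) * x) * exp (q ^ 3 * log R ^ 3) := by rw [exp_add]; ring

theorem jb_pos {d : ℕ} (x : EuclideanSpace ℝ (Fin d)) : 0 < jb x :=
  sqrt_pos.2 (by positivity)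

theorem jb_le_one_add_norm {d : ℕ} (x : EuclideanSpace ℝ (Fin d)) : jb x ≤ 1 + ‖x‖ :=
  (sqrt_le_left (by positivity)).2 (by nlinarith [norm_nonneg x])

def IsWeightedSeparated {d : ℕ} (p δ : ℝ) (A : Set (EuclideanSpace ℝ (Fin d))) : Prop :=
  A.Pairwise fun a b => Disjoint (ball a (δ * jb a ^ (-p))) (ball b (δ * jb b ^ (-p)))

/-- The packing bound for the number of points in the shell `⌊u⌋₊ = n`, times the half of the
decay of `ρ` that is left once the weight has been paid for. -/
noncomputable def shellMass (p : ℝ) (d n : ℕ) : ℝ :=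
  (1 + (2 + 2 ^ p) ^ p) ^ d *
    (((n : ℝ) + 1) ^ ((2 * p + 1) * d) * exp (-(1 / 2) * (n : ℝ) ^ (0.9 : ℝ)))

theorem summable_shellMass {p : ℝ} (hp : 0 ≤ p) (d : ℕ) : Summable (shellMass p d) :=
  (summable_rpow_mul_exp_neg_rpow (by positivity) (by norm_num) (by norm_num)).mul_left _

namespace IsWeightedSeparated

variable {d : ℕ} {p δ : ℝ} {A : Set (EuclideanSpace ℝ (Fin d))} {a₀ : EuclideanSpace ℝ (Fin d)}

theorem mul_rpow_neg_le_norm_sub (hA : IsWeightedSeparated p δ A) (hp : 0 ≤ p) (hδ : 0 < δ)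
    (ha₀ : a₀ ∈ A) (hR : 1 ≤ ‖a₀‖) {a : EuclideanSpace ℝ (Fin d)} (ha : a ∈ A) (hne : a ≠ a₀) :
    (2 : ℝ) ^ (-p) * δ * ‖a₀‖ ^ (-p) ≤ ‖a - a₀‖ := by
  have hrad : ∀ x : EuclideanSpace ℝ (Fin d), 0 < δ * jb x ^ (-p) := fun x =>
    mul_pos hδ (rpow_pos_of_pos (jb_pos x) _)
  have hdist := (disjoint_ball_ball_iff (hrad a) (hrad a₀)).1 (hA ha ha₀ hne)
  have hjb : (2 * ‖a₀‖) ^ (-p) ≤ jb a₀ ^ (-p) :=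
    rpow_le_rpow_of_nonpos (jb_pos a₀) ((jb_le_one_add_norm a₀).trans (by linarith))
      (neg_nonpos.2 hp)
  rw [mul_rpow zero_le_two (by positivity)] at hjb
  rw [dist_eq_norm] at hdist
  nlinarith [hrad a]

theorem card_le_of_forall_norm_sub_le (hA : IsWeightedSeparated p δ A) (hp : 0 ≤ p)
    (hδ : 0 < δ) {G : Finset (EuclideanSpace ℝ (Fin d))} (hGA : ↑G ⊆ A) {t : ℝ} (ht : 0 ≤ t)
    (hGt : ∀ x ∈ G, ‖x - a₀‖ ≤ t) :
    (#G : ℝ) ≤ (1 + t * (1 + ‖a₀‖ + t) ^ p / δ) ^ d := by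
  set r := δ * (1 + ‖a₀‖ + t) ^ (-p) with hr_def
  have hr : 0 < r := by positivity
  have hball : ∀ x ∈ G, ball x r ⊆ ball x (δ * jb x ^ (-p)) := fun x hx => by
    refine ball_subset_ball (mul_le_mul_of_nonneg_left
      (rpow_le_rpow_of_nonpos (jb_pos x) ?_ (neg_nonpos.2 hp)) hδ.le)
    have := norm_le_norm_add_norm_sub' x a₀
    linarith [jb_le_one_add_norm x, hGt x hx]
  have hcard := card_mul_pow_le_of_pairwiseDisjoint_ball hr ht (fun x hx => by
      rw [dist_eq_norm]; exact hGt x hx)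
    fun x hx y hy hxy => (hA (hGA hx) (hGA hy) hxy).mono (hball x hx) (hball y hy)
  rw [finrank_euclideanSpace_fin] at hcard
  have htr : (t + r) / r = 1 + t * (1 + ‖a₀‖ + t) ^ p / δ := by
    rw [hr_def, rpow_neg (by positivity)]
    field_simp
    ring
  rw [← htr, div_pow, le_div_iff₀ (by positivity)]
  exact hcard

theorem card_shell_le (hA : IsWeightedSeparated p δ A) (hp : 0 ≤ p) (hδ : 1 ≤ δ)
    (hR : 1 ≤ ‖a₀‖) (F : Finset ↥(A \ {a₀})) {n : ℕ} (hn : ⌊(2 : ℝ) ^ (-p) * δ ^ (0.5 : ℝ)⌋₊ ≤ n) :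
    (#(F.filter fun a : ↥(A \ {a₀}) => ⌊δ ^ (-(1 : ℝ) / 2) * ‖a₀‖ ^ p * ‖a.1 - a₀‖⌋₊ = n) : ℝ)
      ≤ (1 + (2 + 2 ^ p) ^ p) ^ d * ((n : ℝ) + 1) ^ ((2 * p + 1) * d) := by
  set m := δ ^ (-(1 : ℝ) / 2) * ‖a₀‖ ^ p
  have hm : 0 < m := by positivity
  set U : ℝ := n + 1
  set G := (F.filter fun a : ↥(A \ {a₀}) => ⌊m * ‖a.1 - a₀‖⌋₊ = n).map
    (Function.Embedding.subtype _)
  have hGA : ↑G ⊆ A := by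
    intro x hx
    obtain ⟨a, -, rfl⟩ := Finset.mem_map.1 hx
    exact a.2.1
  have hGt : ∀ x ∈ G, ‖x - a₀‖ ≤ U / m := by
    intro x hx
    obtain ⟨a, ha, rfl⟩ := Finset.mem_map.1 hx
    rw [Function.Embedding.coe_subtype, le_div_iff₀' hm, show U = n + 1 from rfl,
      ← (mem_filter.1 ha).2]
    exact (Nat.lt_floor_add_one _).le
  have hcU : (2 : ℝ) ^ (-p) * δ ^ (0.5 : ℝ) ≤ U :=
    (Nat.lt_floor_add_one _).le.trans (by simp only [U]; exact_mod_cast Nat.add_le_add_right hn 1)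
  calc (#(F.filter fun a : ↥(A \ {a₀}) => ⌊m * ‖a.1 - a₀‖⌋₊ = n) : ℝ) = #G := by
        rw [card_map]
    _ ≤ (1 + U / m * (1 + ‖a₀‖ + U / m) ^ p / δ) ^ d :=
        hA.card_le_of_forall_norm_sub_le hp (by linarith) hGA (by positivity) hGt
    _ ≤ ((1 + (2 + ((2 : ℝ) ^ (-p))⁻¹) ^ p) * U ^ (2 * p + 1)) ^ d :=
        pow_le_pow_left₀ (by positivity)
          (one_add_div_mul_rpow_div_le hp (by positivity) hδ hR (by simp [U]) hcU) d
    _ = (1 + (2 + 2 ^ p) ^ p) ^ d * U ^ ((2 * p + 1) * d) := by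
        rw [rpow_neg zero_le_two, inv_inv, mul_pow, ← rpow_natCast (U ^ (2 * p + 1)),
          ← rpow_mul (by positivity)]

theorem sum_exp_le_tsum_shellMass (hA : IsWeightedSeparated p δ A) (hp : 0 ≤ p) (hδ : 1 ≤ δ)
    (ha₀ : a₀ ∈ A) (hR : 1 ≤ ‖a₀‖) (F : Finset ↥(A \ {a₀})) :
    ∑ a ∈ F, exp (-(1 / 2) * (δ ^ (-(1 : ℝ) / 2) * ‖a₀‖ ^ p * ‖a.1 - a₀‖) ^ (0.9 : ℝ))
      ≤ ∑' k, shellMass p d (k + ⌊(2 : ℝ) ^ (-p) * δ ^ (0.5 : ℝ)⌋₊) := by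
  classical
  set m := δ ^ (-(1 : ℝ) / 2) * ‖a₀‖ ^ p
  have hm : 0 < m := by positivity
  have hshell : ∀ a ∈ F, ⌊(2 : ℝ) ^ (-p) * δ ^ (0.5 : ℝ)⌋₊ ≤ ⌊m * ‖a.1 - a₀‖⌋₊ := by
    intro a _
    refine Nat.floor_le_floor ?_
    rw [← rpow_neg_half_mul_mul_rpow_neg (by linarith) (zero_lt_one.trans_le hR) p]
    gcongr
    exact hA.mul_rpow_neg_le_norm_sub hp (by linarith) ha₀ hR a.2.1 (by simpa using a.2.2)
  calc ∑ a ∈ F, exp (-(1 / 2) * (m * ‖a.1 - a₀‖) ^ (0.9 : ℝ))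
      ≤ ∑ a ∈ F, exp (-(1 / 2) * (⌊m * ‖a.1 - a₀‖⌋₊ : ℝ) ^ (0.9 : ℝ)) := by
        refine sum_le_sum fun a _ => exp_le_exp.2 ?_
        have := rpow_le_rpow (Nat.cast_nonneg _)
          (Nat.floor_le (mul_nonneg hm.le (norm_nonneg (a.1 - a₀)))) (by norm_num : (0 : ℝ) ≤ 0.9)
        linarith
    _ ≤ _ := by
        refine sum_le_tsum_nat_add_of_card_fiber_le F
          (fun a : ↥(A \ {a₀}) => ⌊m * ‖a.1 - a₀‖⌋₊) (summable_shellMass hp d)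
          (h := fun n : ℕ => exp (-(1 / 2) * (n : ℝ) ^ (0.9 : ℝ))) (fun n => (exp_pos _).le)
          hshell fun n hn => ?_
        rw [shellMass, ← mul_assoc]
        gcongr
        exact hA.card_shell_le hp hδ hR F hn

theorem sum_norm_mul_wQE_le {Cρ : ℝ} (hA : IsWeightedSeparated p δ A) (hp : 0 < p)
    (hδ : 1 ≤ δ)
    (hδ_near : 2400 * √p ^ 3 ≤ ((2 : ℝ) ^ (-p) / 3) ^ (0.7 : ℝ) * δ ^ (0.25 : ℝ))
    (hδ_far : 4000 * √p ^ 3 ≤ ((2 : ℝ) ^ (-p)) ^ (0.6 : ℝ) * δ ^ (0.15 : ℝ)) (hCρ : 0 < Cρ)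
    (htail : ∑' k, shellMass p d (k + ⌊(2 : ℝ) ^ (-p) * δ ^ (0.5 : ℝ)⌋₊) ≤ 1 / (4 * Cρ))
    (hA1 : ∀ a ∈ A, 1 ≤ ‖a‖) {ρ : EuclideanSpace ℝ (Fin d) → ℂ}
    (hρ : ∀ x, ‖ρ x‖ ≤ Cρ * exp (-(‖x‖ ^ (0.9 : ℝ)))) (ha₀ : a₀ ∈ A) (F : Finset ↥(A \ {a₀})) :
    ∑ a ∈ F, ‖ρ ((δ ^ (-(1 : ℝ) / 2) * ‖a₀‖ ^ p) • (a.1 - a₀))‖ * wQE (‖a.1‖ ^ √p)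
      ≤ 1 / 4 * wQE (‖a₀‖ ^ √p) := by
  set m := δ ^ (-(1 : ℝ) / 2) * ‖a₀‖ ^ p
  have hR := hA1 a₀ ha₀
  have hm : 0 < m := by positivity
  have hterm : ∀ a : ↥(A \ {a₀}), ‖ρ (m • (a.1 - a₀))‖ * wQE (‖a.1‖ ^ √p)
      ≤ Cρ * exp (-(1 / 2) * (m * ‖a.1 - a₀‖) ^ (0.9 : ℝ)) * wQE (‖a₀‖ ^ √p) := by
    intro a
    have hN := hA1 a a.2.1
    refine mul_wQE_rpow_le hCρ.le ?_ (by linarith) (by linarith) ?_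
    · simpa [norm_smul, abs_of_pos hm] using hρ (m • (a.1 - a₀))
    · exact mul_log_pow_three_le hp.le (by positivity) (by positivity) (by linarith) hδ_near
        hδ_far hR hN
        (hA.mul_rpow_neg_le_norm_sub hp.le (by linarith) ha₀ hR a.2.1 (by simpa using a.2.2))
        (norm_le_norm_add_norm_sub' _ _) (norm_sub_le _ _)
  calc _ ≤ ∑ a ∈ F, Cρ * exp (-(1 / 2) * (m * ‖a.1 - a₀‖) ^ (0.9 : ℝ)) * wQE (‖a₀‖ ^ √p) :=
        sum_le_sum fun a _ => hterm a
    _ = Cρ * wQE (‖a₀‖ ^ √p) *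
          ∑ a ∈ F, exp (-(1 / 2) * (m * ‖a.1 - a₀‖) ^ (0.9 : ℝ)) := by
        rw [mul_sum]; exact sum_congr rfl fun _ _ => by ring
    _ ≤ Cρ * wQE (‖a₀‖ ^ √p) * (1 / (4 * Cρ)) := by
        gcongr
        · exact mul_nonneg hCρ.le (wQE_pos _).le
        · exact (hA.sum_exp_le_tsum_shellMass hp.le hδ ha₀ hR F).trans htail
    _ = 1 / 4 * wQE (‖a₀‖ ^ √p) := by field_simp

end IsWeightedSeparated

/-- For a `(p,δ)`-separated set `A` with all points of norm `≥ 1` and the bump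
`φ_{a₀}(x) = ρ(δ^{-1/2}|a₀|^p (x - a₀))` built from a quasi-exponentially decaying Schwartz
function `ρ` with `ρ(0) = 1`, one has, for all sufficiently large `δ`,
`Σ_{a ≠ a₀} |φ_{a₀}(a)| w(|a|^{√p}) ≤ (1/4) w(|a₀|^{√p})`. -/
theorem bump_offdiagonal_sum_small (d : ℕ) (p Cρ : ℝ) (hp : 0 < p) (hCρ : 0 < Cρ) :
    ∃ δ₀ > (0 : ℝ), ∀ δ : ℝ, δ₀ ≤ δ →
      ∀ A : Set (EuclideanSpace ℝ (Fin d)),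
        (A.Pairwise fun a b =>
          Disjoint (ball a (δ * jb a ^ (-p))) (ball b (δ * jb b ^ (-p)))) →
        (∀ a ∈ A, 1 ≤ ‖a‖) →
        ∀ ρ : SchwartzMap (EuclideanSpace ℝ (Fin d)) ℂ, ρ 0 = 1 →
        (∀ x, ‖ρ x‖ ≤ Cρ * Real.exp (-(‖x‖ ^ (0.9 : ℝ)))) →
        ∀ a₀ ∈ A,
          (∑' a : ↥(A \ {a₀}),
            ‖ρ ((δ ^ (-(1 : ℝ) / 2) * ‖a₀‖ ^ p) •
              ((a : EuclideanSpace ℝ (Fin d)) - a₀))‖ *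
              wQE (‖(a : EuclideanSpace ℝ (Fin d))‖ ^ Real.sqrt p)) ≤
          (1 / 4) * wQE (‖a₀‖ ^ Real.sqrt p) := by
  have hlarge : ∀ {e κ : ℝ}, 0 < e → 0 < κ → ∀ K : ℝ, ∀ᶠ δ : ℝ in atTop, K ≤ κ * δ ^ e :=
    fun he hκ K => ((tendsto_rpow_atTop he).const_mul_atTop hκ).eventually_ge_atTop K
  have htail : ∀ᶠ δ : ℝ in atTop,
      ∑' k, shellMass p d (k + ⌊(2 : ℝ) ^ (-p) * δ ^ (0.5 : ℝ)⌋₊) ≤ 1 / (4 * Cρ) :=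
    ((tendsto_sum_nat_add _).comp (tendsto_nat_floor_atTop.comp
      ((tendsto_rpow_atTop (by norm_num)).const_mul_atTop (by positivity)))).eventually
      (ge_mem_nhds (by positivity))
  have hnear : ∀ᶠ δ : ℝ in atTop,
      2400 * √p ^ 3 ≤ ((2 : ℝ) ^ (-p) / 3) ^ (0.7 : ℝ) * δ ^ (0.25 : ℝ) :=
    hlarge (by norm_num) (by positivity) _
  have hfar : ∀ᶠ δ : ℝ in atTop, 4000 * √p ^ 3 ≤ ((2 : ℝ) ^ (-p)) ^ (0.6 : ℝ) * δ ^ (0.15 : ℝ) :=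
    hlarge (by norm_num) (by positivity) _
  obtain ⟨δ₀, hδ₀⟩ :=
    eventually_atTop.1 ((eventually_ge_atTop 1).and (hnear.and (hfar.and htail)))
  refine ⟨max δ₀ 1, lt_max_of_lt_right one_pos, fun δ hδ A hA hA1 ρ _ hρ a₀ ha₀ => ?_⟩
  obtain ⟨hδ1, hnear, hfar, htail⟩ := hδ₀ δ (le_of_max_le_left hδ)
  exact tsum_le_of_sum_le' (mul_nonneg (by norm_num) (wQE_pos _).le)
    (IsWeightedSeparated.sum_norm_mul_wQE_le hA hp hδ1 hnear hfar hCρ htail hA1 hρ ha₀)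
end
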